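/- Let β = (β_0,...,β_{2k}) ∈ ℝ^{2k+1} with A_β positive semidefinite, β̃ = (β_0,...,β_{2k-2}), and r = rank β̃. If A_β(r-1) is invertible and (φ_0,...,φ_{r-1})^T := A_β(r-1)^{-1} (β_r,...,β_{2r-1})^T, then rank A_β = r if and only if β_{2k} = φ_0 β_{2k-r} + ... + φ_{r-1} β_{2k-1}. -/

import Mathlib

open Matrix

/-- The (k+1)×(k+1) Hankel matrix of a sequence β = (β₀,...,β₂ₖ). -/
def hankel {k : ℕ} (β : Fin (2*k+1) → ℝ) : Matrix (Fin (k+1)) (Fin (k+1)) ℝ :=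
  fun i j => β ⟨i.1 + j.1, by have := i.2; have := j.2; omega⟩

/-- The leading principal (j+1)×(j+1) submatrix A(j) of a (k+1)×(k+1) matrix, j ≤ k. -/
def leadSub {k : ℕ} (A : Matrix (Fin (k+1)) (Fin (k+1)) ℝ) (j : ℕ) (h : j ≤ k) :
    Matrix (Fin (j+1)) (Fin (j+1)) ℝ :=
  A.submatrix (Fin.castLE (by omega)) (Fin.castLE (by omega))

/-- The leading principal r×r submatrix of a (k+1)×(k+1) matrix, r ≤ k+1. -/
def leadSq {k : ℕ} (A : Matrix (Fin (k+1)) (Fin (k+1)) ℝ) (r : ℕ) (h : r ≤ k+1) :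
    Matrix (Fin r) (Fin r) ℝ :=
  A.submatrix (Fin.castLE h) (Fin.castLE h)

/-- The rank of a sequence via its Hankel matrix: k+1 if the matrix is nonsingular, and
otherwise the least index i whose column lies in the span of the preceding columns. -/
noncomputable def hankelRank {k : ℕ} (A : Matrix (Fin (k+1)) (Fin (k+1)) ℝ) : ℕ :=
  if A.det ≠ 0 then k+1
  else sInf {i : ℕ | ∃ h : i < k+1,
    (fun r => A r ⟨i, h⟩) ∈ Submodule.span ℝ
      {c : Fin (k+1) → ℝ | ∃ j : Fin (k+1), j.1 < i ∧ c = fun r => A r j}}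

/-- The truncation (β₀,...,β₂₍ₖ₋₁₎) of (β₀,...,β₂ₖ). -/
def trunc {k : ℕ} (β : Fin (2*k+1) → ℝ) : Fin (2*(k-1)+1) → ℝ :=
  fun i => β ⟨i.1, by have := i.2; omega⟩

/-!
Write `b` for `β` extended by zero and `φ` for the coefficients of the recurrence
`b (t + r) = ∑ φᵢ b (t + i)`, which holds for `t < r` because `A_β(r-1) φ = (β_r, …, β_{2r-1})`.
Since `r` is the rank of `β̃`, it holds for `t < k`. Positive semidefiniteness carries it further:
if it holds below `t ≥ k`, then `u = e_m - ∑ φᵢ e_{m-r+i}` with `m = t - k + r` is supported in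
the rows `< k`, where `A_β u` vanishes; so `uᵀ A_β u = 0`, hence `A_β u = 0`, and the last entry of
`A_β u` is the defect of the recurrence at `t`. Thus it holds for `t < 2k - r`, which puts every
column of `A_β` but the last in the span `W` of the first `r` columns. These are independent, and
a vector of `W` vanishing in the first `r` rows is zero. The last column differs from its predicted
combination by the defect at `2k - r` times `e_k`, so `rank A_β = r` iff that defect vanishes.
-/

open Submodule

def extendSeq {α : Type*} [Zero α] {n : ℕ} (β : Fin n → α) (t : ℕ) : α :=
  if h : t < n then β ⟨t, h⟩ else 0

lemma extendSeq_of_lt {α : Type*} [Zero α] {n : ℕ} (β : Fin n → α) {t : ℕ} (h : t < n) :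
    extendSeq β t = β ⟨t, h⟩ :=
  dif_pos h

def hankelMatrix {α : Type*} (b : ℕ → α) (n : ℕ) : Matrix (Fin n) (Fin n) α :=
  Matrix.of fun i j => b (i + j)

def hankelCol {α : Type*} (b : ℕ → α) (n m : ℕ) : Fin n → α :=
  fun s => b (s + m)

def recDefect {R : Type*} [Ring R] (b : ℕ → R) {r : ℕ} (φ : Fin r → R) (t : ℕ) : R :=
  b (t + r) - ∑ i, φ i * b (t + i)

section HankelColumns

variable {K : Type*} [Field K] {b : ℕ → K} {n r : ℕ}

lemma hankelMatrix_mulVec_single (j : Fin n) :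
    hankelMatrix b n *ᵥ Pi.single j 1 = hankelCol b n j := by
  rw [mulVec_single_one]
  rfl

lemma hankelMatrix_mulVec_apply (d : Fin r → K) (s : Fin r) :
    (hankelMatrix b r *ᵥ d) s = ∑ j, d j * b (s + j) := by
  simp only [mulVec, dotProduct, hankelMatrix, of_apply, mul_comm]

lemma sum_smul_hankelCol_apply (d : Fin r → K) (s : Fin n) :
    (∑ j, d j • hankelCol b n j) s = ∑ j, d j * b (s + j) := by
  simp only [Finset.sum_apply, Pi.smul_apply, smul_eq_mul, hankelCol]

lemma hankelMatrix_mulVec_eq_iff (φ : Fin r → K) :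
    hankelMatrix b r *ᵥ φ = (fun i : Fin r => b (r + i)) ↔ ∀ t < r, recDefect b φ t = 0 := by
  simp only [funext_iff, hankelMatrix_mulVec_apply, recDefect, sub_eq_zero, Fin.forall_iff]
  exact forall₂_congr fun t _ => by rw [add_comm r, eq_comm]

lemma hankelCol_sub_sum_smul {m : ℕ} (φ : Fin r → K) (hrm : r ≤ m) :
    hankelCol b n m - ∑ i, φ i • hankelCol b n (m - r + i) =
      fun s : Fin n => recDefect b φ (s + m - r) := by
  funext s
  simp only [Pi.sub_apply, Finset.sum_apply, Pi.smul_apply, smul_eq_mul, hankelCol, recDefect]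
  rw [Nat.sub_add_cancel (show r ≤ s + m by omega)]
  congr! 4 with i
  omega

lemma eq_zero_of_sum_smul_hankelCol_eq_zero (hB : (hankelMatrix b r).det ≠ 0) (hrn : r ≤ n)
    (d : Fin r → K) (h : ∀ s : Fin n, (s : ℕ) < r → (∑ j, d j • hankelCol b n j) s = 0) :
    d = 0 :=
  eq_zero_of_mulVec_eq_zero hB <| funext fun s => by
    have hs := h ⟨s, by omega⟩ s.isLt
    rw [sum_smul_hankelCol_apply] at hs
    rw [hankelMatrix_mulVec_apply]
    exact hs

lemma linearIndependent_hankelCol (hB : (hankelMatrix b r).det ≠ 0) (hrn : r ≤ n) :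
    LinearIndependent K fun j : Fin r => hankelCol b n j :=
  Fintype.linearIndependent_iff.2 fun d hd =>
    congrFun (eq_zero_of_sum_smul_hankelCol_eq_zero hB hrn d fun s _ => by rw [hd]; rfl)

lemma eq_zero_of_mem_span_hankelCol (hB : (hankelMatrix b r).det ≠ 0) (hrn : r ≤ n)
    {w : Fin n → K} (hw : w ∈ span K (Set.range fun j : Fin r => hankelCol b n j))
    (h : ∀ s : Fin n, (s : ℕ) < r → w s = 0) : w = 0 := by
  obtain ⟨d, rfl⟩ := (mem_span_range_iff_exists_fun K).1 hw
  obtain rfl := eq_zero_of_sum_smul_hankelCol_eq_zero hB hrn d h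
  simp

lemma hankelCol_mem_span {φ : Fin r → K} {T : ℕ} (hφ : ∀ t < T, recDefect b φ t = 0) (m : ℕ)
    (hm : m + n ≤ T + r) : hankelCol b n m ∈ span K (Set.range fun j : Fin r => hankelCol b n j) := by
  induction m using Nat.strong_induction_on with
  | _ m ih =>
  by_cases hmr : m < r
  · exact subset_span ⟨⟨m, hmr⟩, rfl⟩
  have hcol : hankelCol b n m = ∑ i, φ i • hankelCol b n (m - r + i) := by
    rw [← sub_eq_zero, hankelCol_sub_sum_smul φ (by omega)]
    funext s
    exact hφ _ (by have := s.isLt; omega)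
  rw [hcol]
  exact sum_mem fun i _ => smul_mem _ _ (ih _ (by omega) (by omega))

theorem rank_hankelMatrix_eq_iff {N : ℕ} {φ : Fin r → K} (hrN : r ≤ N)
    (hB : (hankelMatrix b r).det ≠ 0) (hφ : ∀ t < 2 * N - r, recDefect b φ t = 0) :
    (hankelMatrix b (N + 1)).rank = r ↔ recDefect b φ (2 * N - r) = 0 := by
  set W := span K (Set.range fun j : Fin r => hankelCol b (N + 1) j)
  have hWle : W ≤ span K (Set.range (hankelMatrix b (N + 1)).col) :=
    span_mono <| by rintro _ ⟨j, rfl⟩; exact ⟨Fin.castLE (by omega) j, rfl⟩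
  have hfinW : Module.finrank K W = r := by
    rw [finrank_span_eq_card (linearIndependent_hankelCol hB (by omega)), Fintype.card_fin]
  rw [rank_eq_finrank_span_cols]
  constructor
  · intro hrank
    have hlast : hankelCol b (N + 1) N ∈ W := by
      rw [eq_of_le_of_finrank_eq hWle (hfinW.trans hrank.symm)]
      exact subset_span ⟨Fin.last N, rfl⟩
    have hD : hankelCol b (N + 1) N - ∑ i, φ i • hankelCol b (N + 1) (N - r + i) ∈ W :=
      sub_mem hlast <| sum_mem fun i _ =>
        smul_mem W (φ i) (hankelCol_mem_span hφ (N - r + i) (by omega))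
    rw [hankelCol_sub_sum_smul φ hrN] at hD
    have hD0 := congrFun (eq_zero_of_mem_span_hankelCol hB (by omega) hD
      fun s hs => hφ _ (by omega)) (Fin.last N)
    rwa [Fin.val_last, show N + N - r = 2 * N - r by omega] at hD0
  · intro hlast
    have hφ' : ∀ t < 2 * N - r + 1, recDefect b φ t = 0 := fun t ht =>
      (Nat.lt_succ_iff_lt_or_eq.1 ht).elim (hφ t) (· ▸ hlast)
    have hspan : span K (Set.range (hankelMatrix b (N + 1)).col) = W :=
      le_antisymm (span_le.2 <| by
        rintro _ ⟨j, rfl⟩; exact hankelCol_mem_span hφ' j (by omega)) hWle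
    rw [hspan, hfinW]

end HankelColumns

section PosSemidef

open scoped ComplexOrder

lemma Matrix.PosSemidef.mulVec_eq_zero_of_forall_eq_zero_or {𝕜 n : Type*} [RCLike 𝕜] [Fintype n]
    {A : Matrix n n 𝕜} (hA : A.PosSemidef) {u : n → 𝕜} (h : ∀ i, u i = 0 ∨ (A *ᵥ u) i = 0) :
    A *ᵥ u = 0 :=
  (hA.dotProduct_mulVec_zero_iff u).1 <| Finset.sum_eq_zero fun i _ => by
    rcases h i with h | h <;> simp [h]

theorem recDefect_eq_zero_of_posSemidef {𝕜 : Type*} [RCLike 𝕜] {b : ℕ → 𝕜} {N r : ℕ}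
    {φ : Fin r → 𝕜} (hpsd : (hankelMatrix b (N + 1)).PosSemidef) (hrN : r ≤ N)
    (h : ∀ t < N, recDefect b φ t = 0) : ∀ t < 2 * N - r, recDefect b φ t = 0 := by
  intro t
  induction t using Nat.strong_induction_on with
  | _ t ih =>
  intro ht
  by_cases htN : t < N
  · exact h t htN
  set m := t - N + r
  set u : Fin (N + 1) → 𝕜 := Pi.single ⟨m, by omega⟩ 1 -
    ∑ i : Fin r, φ i • Pi.single ⟨m - r + i, by omega⟩ 1
  have hHu : hankelMatrix b (N + 1) *ᵥ u = fun s : Fin (N + 1) => recDefect b φ (s + m - r) := by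
    simp only [u, mulVec_sub, mulVec_sum, mulVec_smul, hankelMatrix_mulVec_single]
    exact hankelCol_sub_sum_smul φ (by omega)
  have hu : hankelMatrix b (N + 1) *ᵥ u = 0 := by
    refine hpsd.mulVec_eq_zero_of_forall_eq_zero_or fun s => ?_
    rcases Fin.eq_castSucc_or_eq_last s with ⟨s, rfl⟩ | rfl
    · exact .inr (hHu ▸ ih _ (by rw [Fin.val_castSucc]; omega) (by rw [Fin.val_castSucc]; omega))
    · refine .inl ?_
      simp only [u, Pi.sub_apply, Finset.sum_apply, Pi.smul_apply, Pi.single_apply, Fin.ext_iff,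
        Fin.val_last]
      rw [if_neg (by omega), Finset.sum_eq_zero fun i _ => by rw [if_neg (by omega), smul_zero],
        sub_zero]
  have hlast := congrFun (hHu.symm.trans hu) (Fin.last N)
  rwa [Fin.val_last, show N + m - r = t by omega] at hlast

end PosSemidef

lemma col_mem_span_of_hankelRank_eq {k r : ℕ} (A : Matrix (Fin (k + 1)) (Fin (k + 1)) ℝ)
    (hr : hankelRank A = r) (hr1 : 1 ≤ r) (hrk : r < k + 1) :
    (fun i => A i ⟨r, hrk⟩) ∈
      span ℝ {c : Fin (k + 1) → ℝ | ∃ j : Fin (k + 1), j.1 < r ∧ c = fun i => A i j} := by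
  unfold hankelRank at hr
  split_ifs at hr
  · omega
  subst hr
  exact (Nat.sInf_mem (Nat.nonempty_of_pos_sInf hr1)).2

theorem recDefect_eq_zero_of_hankelRank {b : ℕ → ℝ} {k r : ℕ} {φ : Fin r → ℝ}
    (hr : hankelRank (hankelMatrix b (k + 1)) = r) (hr1 : 1 ≤ r) (hrk : r ≤ k + 1)
    (hB : (hankelMatrix b r).det ≠ 0) (hφ : hankelMatrix b r *ᵥ φ = fun i : Fin r => b (r + i)) :
    ∀ t < k + 1, recDefect b φ t = 0 := by
  rcases hrk.eq_or_lt with rfl | hlt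
  · exact (hankelMatrix_mulVec_eq_iff φ).1 hφ
  have hcols : {c | ∃ j : Fin (k + 1), j.1 < r ∧ c = fun i => hankelMatrix b (k + 1) i j} ⊆
      Set.range fun j : Fin r => hankelCol b (k + 1) j := by
    rintro _ ⟨j, hj, rfl⟩
    exact ⟨⟨j, hj⟩, rfl⟩
  obtain ⟨ψ, hψ⟩ := (mem_span_range_iff_exists_fun ℝ).1 <|
    span_mono hcols (col_mem_span_of_hankelRank_eq _ hr hr1 hlt)
  have hψ0 : ∀ t < k + 1, recDefect b ψ t = 0 := fun t ht => by
    have ht' := congrFun hψ ⟨t, ht⟩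
    rw [sum_smul_hankelCol_apply] at ht'
    rw [recDefect, ht', sub_eq_zero]
    rfl
  obtain rfl : ψ = φ := mulVec_injective_of_det_ne_zero hB <|
    ((hankelMatrix_mulVec_eq_iff ψ).2 fun t ht => hψ0 t (by omega)).trans hφ.symm
  exact hψ0

lemma hankel_eq_hankelMatrix {k : ℕ} (β : Fin (2 * k + 1) → ℝ) :
    hankel β = hankelMatrix (extendSeq β) (k + 1) := by
  ext i j
  exact (extendSeq_of_lt β _).symm

lemma leadSq_hankel {k r : ℕ} (β : Fin (2 * k + 1) → ℝ) (h : r ≤ k + 1) :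
    leadSq (hankel β) r h = hankelMatrix (extendSeq β) r := by
  ext i j
  exact (extendSeq_of_lt β _).symm

lemma hankel_trunc {k : ℕ} (β : Fin (2 * k + 1) → ℝ) :
    hankel (trunc β) = hankelMatrix (extendSeq β) (k - 1 + 1) := by
  ext i j
  exact (extendSeq_of_lt β _).symm

theorem stmt9 {k : ℕ} (β : Fin (2*k+1) → ℝ) (hpsd : (hankel β).PosSemidef)
    (r : ℕ) (hr : r = hankelRank (hankel (trunc β))) (hr1 : 1 ≤ r) (hrk : r ≤ k)
    (hinv : (leadSq (hankel β) r (by omega)).det ≠ 0)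
    (φ : Fin r → ℝ)
    (hφ : φ = (leadSq (hankel β) r (by omega))⁻¹ *ᵥ
      (fun i : Fin r => β ⟨r + i.1, by have := i.2; omega⟩)) :
    (hankel β).rank = r ↔
      β ⟨2*k, by omega⟩ = ∑ i : Fin r, φ i * β ⟨2*k - r + i.1, by have := i.2; omega⟩ := by
  rw [leadSq_hankel] at hinv hφ
  rw [hankel_eq_hankelMatrix] at hpsd ⊢
  rw [hankel_trunc] at hr
  have hBφ : hankelMatrix (extendSeq β) r *ᵥ φ = fun i : Fin r => extendSeq β (r + i) := by
    rw [hφ, mulVec_mulVec, mul_nonsing_inv _ (isUnit_iff_ne_zero.2 hinv), one_mulVec]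
    exact funext fun i => (extendSeq_of_lt β _).symm
  have hbase := recDefect_eq_zero_of_hankelRank hr.symm hr1 (by omega) hinv hBφ
  have hall := recDefect_eq_zero_of_posSemidef hpsd hrk fun t ht => hbase t (by omega)
  rw [rank_hankelMatrix_eq_iff hrk hinv hall, recDefect, sub_eq_zero,
    Nat.sub_add_cancel (by omega : r ≤ 2 * k), extendSeq_of_lt β (by omega : 2 * k < 2 * k + 1)]
  exact Eq.congr_right <| Finset.sum_congr rfl fun i _ => by
    rw [extendSeq_of_lt β (by have := i.isLt; omega : 2 * k - r + i < 2 * k + 1)]
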